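/- arXiv:2407.18776 — 2 statements merged into one kernel-verified Lean document; each statement's English description precedes it below -/
import Mathlib

section
/- Let 𝔇 ≥ 0, n ≥ 3, and U(x̄, xₙ) = (4n(n−1))^{(n−2)/4} (1 + |x̄|² + (xₙ + 𝔇)²)^{−(n−2)/2}. Then on the boundary {xₙ = 0}, U satisfies the nonlinear Neumann condition −(2/(n−2)) ∂_{xₙ} U = (𝔇/√(n(n−1))) · U^{n/(n−2)}. -/
/-!
Along `eₙ` only the last square in `U = c · (1 + |x̄|² + (xₙ + 𝔇)²)^p`, `p = −(n−2)/2`, varies, so on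
`{xₙ = 0}` the normal derivative is `2𝔇 p c g^(p−1)` with `g = 1 + |x̄|² + 𝔇²`. Since
`p − 1 = p · n/(n−2)`, both sides are multiples of `g^(−n/2)`, and the constants agree because
`c^(n/(n−2)) = (4n(n−1))^(n/4) = 2√(n(n−1)) · c`.
-/

/-- The standard bubble
`U(x̄, xₙ) = (4n(n−1))^{(n−2)/4} (1 + |x̄|² + (xₙ + 𝔇)²)^{−(n−2)/2}`. -/
noncomputable def Ustd (n : ℕ) (hn : 3 ≤ n) (D : ℝ)
    (x : EuclideanSpace ℝ (Fin n)) : ℝ :=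
  (4 * (n : ℝ) * ((n : ℝ) - 1)) ^ (((n : ℝ) - 2) / 4) *
    (1 + (∑ i : Fin n, if (i : ℕ) < n - 1 then (x i) ^ 2 else 0) +
      (x ⟨n - 1, by omega⟩ + D) ^ 2) ^ (-(((n : ℝ) - 2) / 2))

theorem differentiableAt_Ustd {n : ℕ} (hn : 3 ≤ n) (D : ℝ) (x : EuclideanSpace ℝ (Fin n)) :
    DifferentiableAt ℝ (Ustd n hn D) x := by
  unfold Ustd
  simp_rw [← Finset.sum_filter]
  have hpos : 0 < 1 + (∑ i ∈ Finset.univ.filter fun i : Fin n => (i : ℕ) < n - 1, (x i) ^ 2) +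
      (x ⟨n - 1, by omega⟩ + D) ^ 2 := by
    positivity
  fun_prop (disch := exact hpos.ne')

theorem Ustd_add_smul_single_last {n : ℕ} (hn : 3 ≤ n) (D : ℝ) (x : EuclideanSpace ℝ (Fin n))
    (t : ℝ) :
    Ustd n hn D (x + t • EuclideanSpace.single ⟨n - 1, by omega⟩ 1) =
      (4 * (n : ℝ) * ((n : ℝ) - 1)) ^ (((n : ℝ) - 2) / 4) *
        (1 + (∑ i : Fin n, if (i : ℕ) < n - 1 then (x i) ^ 2 else 0) +
          (x ⟨n - 1, by omega⟩ + D + t) ^ 2) ^ (-(((n : ℝ) - 2) / 2)) := by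
  unfold Ustd
  congr 4
  · refine Finset.sum_congr rfl fun i _ => ?_
    split_ifs with hi
    · have : i ≠ ⟨n - 1, by omega⟩ := fun h => by simp [h] at hi
      simp [this]
    · rfl
  · simp only [PiLp.add_apply, PiLp.smul_apply, PiLp.single_eq_same, smul_eq_mul, mul_one]
    ring

theorem hasDerivAt_mul_rpow_add_sq {a b c p : ℝ} (ha : 0 < a) :
    HasDerivAt (fun t => c * (a + (b + t) ^ 2) ^ p) (c * (2 * b * p * (a + b ^ 2) ^ (p - 1))) 0 := by
  have hb : HasDerivAt (fun t => a + (b + t) ^ 2) (2 * b) 0 := by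
    simpa using (((hasDerivAt_id (0:ℝ)).const_add b).pow 2).const_add a
  simpa using (hb.rpow_const (p := p) (Or.inl (by positivity))).const_mul c

theorem bubble_const_rpow {m : ℝ} (hm : 2 < m) :
    ((4 * m * (m - 1)) ^ ((m - 2) / 4)) ^ (m / (m - 2)) =
      2 * √(m * (m - 1)) * (4 * m * (m - 1)) ^ ((m - 2) / 4) := by
  have hA : 0 < 4 * m * (m - 1) := by nlinarith
  rw [← Real.rpow_mul hA.le, show (m - 2) / 4 * (m / (m - 2)) = 1 / 2 + (m - 2) / 4 by
    field_simp [show m - 2 ≠ 0 by linarith]; ring, Real.rpow_add hA, ← Real.sqrt_eq_rpow,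
    show 4 * m * (m - 1) = 2 ^ 2 * (m * (m - 1)) by ring, Real.sqrt_mul (by norm_num),
    Real.sqrt_sq (by norm_num)]

/-- On `{xₙ = 0}`, `U` satisfies the nonlinear Neumann condition
`−(2/(n−2)) ∂_{xₙ}U = (𝔇/√(n(n−1))) U^{n/(n−2)}`. -/
theorem stmt5 {n : ℕ} (hn : 3 ≤ n) (D : ℝ)
    (x : EuclideanSpace ℝ (Fin n)) (hx : x ⟨n - 1, by omega⟩ = 0) :
    -(2 / ((n : ℝ) - 2)) *
        fderiv ℝ (Ustd n hn D) x (EuclideanSpace.single ⟨n - 1, by omega⟩ 1) =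
      (D / Real.sqrt ((n : ℝ) * ((n : ℝ) - 1))) *
        (Ustd n hn D x) ^ ((n : ℝ) / ((n : ℝ) - 2)) := by
  have hn2 : (2 : ℝ) < n := by exact_mod_cast hn
  have hn2' : (n : ℝ) - 2 ≠ 0 := by linarith
  set c : ℝ := (4 * (n : ℝ) * ((n : ℝ) - 1)) ^ (((n : ℝ) - 2) / 4) with hc_def
  set a : ℝ := 1 + ∑ i : Fin n, if (i : ℕ) < n - 1 then (x i) ^ 2 else 0
  set p : ℝ := -(((n : ℝ) - 2) / 2)
  have ha : 0 < a := by positivity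
  have hline : HasLineDerivAt ℝ (Ustd n hn D) (c * (2 * D * p * (a + D ^ 2) ^ (p - 1))) x
      (EuclideanSpace.single ⟨n - 1, by omega⟩ 1) := by
    unfold HasLineDerivAt
    simp_rw [Ustd_add_smul_single_last, hx, zero_add]
    exact hasDerivAt_mul_rpow_add_sq ha
  have hUx : Ustd n hn D x = c * (a + D ^ 2) ^ p := by simp [Ustd, hx, a, c, p]
  have hc : 0 < c := Real.rpow_pos_of_pos (by nlinarith) _
  have hsqrt : √((n : ℝ) * (n - 1)) ≠ 0 := (Real.sqrt_pos.2 (by nlinarith)).ne'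
  rw [← (differentiableAt_Ustd hn D x).lineDeriv_eq_fderiv, hline.lineDeriv, hUx,
    Real.mul_rpow hc.le (by positivity), bubble_const_rpow hn2, ← Real.rpow_mul (by positivity),
    show p - 1 = p * (n / (n - 2)) by simp only [p]; field_simp [hn2']; ring, ← hc_def]
  field_simp [hn2']
  simp only [p]
  ring
end

section
/- Let n ≥ 3, 𝔇 ≥ 0, and K : the closed upper half-space → ℝ be a bounded C² function with bounded first and second derivatives. Then as λ → 0⁺, ∫_{ℝⁿ₊} K(λȳ, λyₙ)/(|ȳ|² + (yₙ + 𝔇)² + 1)ⁿ dȳ dyₙ = K(0)·A + λ·∂_{xₙ}K(0)·B + o(λ), where A = ∫_{ℝⁿ₊} (|ȳ|² + (yₙ + 𝔇)² + 1)^{−n} dȳ dyₙ and B = ∫_{ℝⁿ₊} yₙ·(|ȳ|² + (yₙ + 𝔇)² + 1)^{−n} dȳ dyₙ. -/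
/-!
Put `F(λ) = ∫ K(λy) w(y) dy` over the half-space, with `w(y) = (|ȳ|² + (yₙ + 𝔇)² + 1)⁻ⁿ`.
Since `|d/dλ K(λy)| ≤ ‖DK‖∞ |y|` and `|y| w(y) ≲ (1 + |y|)^(1 - 2n)` is integrable on `ℝⁿ₊`
(as `2n - 1 > n`), `F` may be differentiated under the integral sign at `0`, with `F'(0) = ∫ DK(0) y · w(y) dy`.
As `w` is even in `ȳ`, the tangential part `∂ᵢK(0) yᵢ` of `DK(0) y` integrates to zero, so
`F'(0) = ∂ₙK(0) · B`, and the expansion is the definition of `F'(0)`.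
-/

open MeasureTheory Filter Topology Asymptotics

theorem hasDerivAt_integral_comp_smul_mul {E : Type*} [NormedAddCommGroup E] [NormedSpace ℝ E]
    [MeasurableSpace E] [OpensMeasurableSpace E] {μ : Measure E} {K w : E → ℝ} {C : ℝ}
    (hK : Differentiable ℝ K) (hK' : ∀ p, ‖fderiv ℝ K p‖ ≤ C)
    (hw : Integrable w μ) (hw' : Integrable (fun p => ‖p‖ * w p) μ) :
    HasDerivAt (fun t : ℝ => ∫ p, K (t • p) * w p ∂μ) (∫ p, fderiv ℝ K 0 p * w p ∂μ) 0 := by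
  have key := hasDerivAt_integral_of_dominated_loc_of_deriv_le (μ := μ) (x₀ := (0 : ℝ))
    (F := fun t p => K (t • p) * w p) (F' := fun t p => fderiv ℝ K (t • p) p * w p)
    (bound := fun p => C * (‖p‖ * |w p|)) Filter.univ_mem
    (Eventually.of_forall fun t =>
      (hK.continuous.comp (continuous_const_smul t)).aestronglyMeasurable.mul
        hw.aestronglyMeasurable)
    (by simpa only [zero_smul] using hw.const_mul (K 0))
    (by
      simp only [zero_smul]
      exact (fderiv ℝ K 0).continuous.aestronglyMeasurable.mul hw.aestronglyMeasurable)
    (Eventually.of_forall fun p t _ => by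
      rw [norm_mul, Real.norm_eq_abs (w p), ← mul_assoc]
      gcongr
      exact (fderiv ℝ K (t • p)).le_of_opNorm_le (hK' _) p)
    ((hw'.norm.const_mul C).congr (Eventually.of_forall fun p => by simp))
    (Eventually.of_forall fun p t _ => by
      have hpath : HasDerivAt (fun s : ℝ => s • p) p t := by
        simpa using (hasDerivAt_id t).smul_const p
      exact ((hK _).hasFDerivAt.comp_hasDerivAt t hpath).mul_const (w p))
  simpa only [zero_smul] using key.2

theorem MeasureTheory.Integrable.clm_mul_of_norm_mul {X : Type*} [NormedAddCommGroup X]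
    [NormedSpace ℝ X] [MeasurableSpace X] [OpensMeasurableSpace X] {μ : Measure X} {w : X → ℝ}
    (L : X →L[ℝ] ℝ) (hw : Integrable w μ) (hw' : Integrable (fun p => ‖p‖ * w p) μ) :
    Integrable (fun p => L p * w p) μ := by
  refine (hw'.norm.const_mul ‖L‖).mono'
    (L.continuous.aestronglyMeasurable.mul hw.aestronglyMeasurable)
    (Eventually.of_forall fun p => ?_)
  rw [norm_mul, norm_mul, norm_norm, ← mul_assoc]
  gcongr
  exact L.le_opNorm p

theorem setIntegral_eq_zero_of_odd_fst {E F : Type*} [MeasurableSpace E] [InvolutiveNeg E]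
    [MeasurableNeg E] [MeasurableSpace F] (μ : Measure E) [μ.IsNegInvariant] [SFinite μ]
    (ν : Measure F) [SFinite ν] {s : Set F} (hs : MeasurableSet s) {f : E × F → ℝ}
    (hf : ∀ x y, f (-x, y) = -f (x, y)) :
    ∫ p in {p : E × F | p.2 ∈ s}, f p ∂(μ.prod ν) = 0 := by
  let T : E × F ≃ᵐ E × F := (MeasurableEquiv.neg E).prodCongr (MeasurableEquiv.refl F)
  have hT : MeasurePreserving T ((μ.prod ν).restrict {p | p.2 ∈ s})
      ((μ.prod ν).restrict {p | p.2 ∈ s}) :=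
    ((Measure.measurePreserving_neg μ).prod (MeasurePreserving.id ν)).restrict_preimage
      (measurable_snd hs)
  have h := hT.integral_comp T.measurableEmbedding f
  have hfT : ∀ p, f (T p) = -f p := fun p => hf p.1 p.2
  simp only [hfT, integral_neg] at h
  linarith

theorem setIntegral_clm_mul_eq_of_even_fst {E : Type*} [NormedAddCommGroup E] [NormedSpace ℝ E]
    [MeasurableSpace E] [BorelSpace E] (μ : Measure E)
    [μ.IsNegInvariant] [SFinite μ] (ν : Measure ℝ) [SFinite ν] {s : Set ℝ} (hs : MeasurableSet s)
    (L : E × ℝ →L[ℝ] ℝ) {w : E × ℝ → ℝ} (hw_even : ∀ x y, w (-x, y) = w (x, y))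
    (hw : Integrable w ((μ.prod ν).restrict {p | p.2 ∈ s}))
    (hw' : Integrable (fun p => ‖p‖ * w p) ((μ.prod ν).restrict {p | p.2 ∈ s})) :
    ∫ p in {p : E × ℝ | p.2 ∈ s}, L p * w p ∂(μ.prod ν) =
      L (0, 1) * ∫ p in {p : E × ℝ | p.2 ∈ s}, p.2 * w p ∂(μ.prod ν) := by
  let L₁ : E × ℝ →L[ℝ] ℝ :=
    L.comp ((ContinuousLinearMap.inl ℝ E ℝ).comp (ContinuousLinearMap.fst ℝ E ℝ))
  have hsplit : ∀ p : E × ℝ, L p * w p = L₁ p * w p + L (0, 1) * (p.2 * w p) := fun p => by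
    have hp : L p = L (p.1, 0) + p.2 * L (0, 1) := by
      rw [← smul_eq_mul, ← map_smul, ← map_add, Prod.smul_mk, smul_zero, smul_eq_mul, mul_one,
        Prod.mk_add_mk, add_zero, zero_add]
    simp only [L₁, hp, ContinuousLinearMap.comp_apply, ContinuousLinearMap.inl_apply,
      ContinuousLinearMap.coe_fst']
    ring
  have hodd : ∫ p in {p : E × ℝ | p.2 ∈ s}, L₁ p * w p ∂(μ.prod ν) = 0 :=
    setIntegral_eq_zero_of_odd_fst μ ν hs fun x y => by
      simp only [L₁, ContinuousLinearMap.comp_apply, ContinuousLinearMap.inl_apply,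
        ContinuousLinearMap.coe_fst', hw_even, map_neg, neg_mul]
  have hsnd : Integrable (fun p : E × ℝ => p.2 * w p) ((μ.prod ν).restrict {p | p.2 ∈ s}) :=
    hw.clm_mul_of_norm_mul (ContinuousLinearMap.snd ℝ E ℝ) hw'
  simp_rw [hsplit]
  rw [integral_add (hw.clm_mul_of_norm_mul L₁ hw') (hsnd.const_mul _), hodd, integral_const_mul,
    zero_add]

theorem one_add_norm_sq_le_of_snd_nonneg {E : Type*} [NormedAddCommGroup E] {D : ℝ} (hD : 0 ≤ D)
    {p : E × ℝ} (hp : 0 ≤ p.2) : (1 + ‖p‖) ^ 2 ≤ 2 * (‖p.1‖ ^ 2 + (p.2 + D) ^ 2 + 1) := by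
  have hnorm : ‖p‖ ^ 2 ≤ ‖p.1‖ ^ 2 + p.2 ^ 2 := by
    rw [Prod.norm_def, Real.norm_eq_abs]
    rcases le_total ‖p.1‖ |p.2| with h | h
    · rw [max_eq_right h, sq_abs]; nlinarith [sq_nonneg ‖p.1‖]
    · rw [max_eq_left h]; nlinarith [sq_nonneg p.2]
  nlinarith [sq_nonneg (1 - ‖p‖)]

theorem integrable_norm_pow_mul_inv_weight {E : Type*} [NormedAddCommGroup E] [NormedSpace ℝ E]
    [FiniteDimensional ℝ E] [MeasurableSpace E] [BorelSpace E] (μ : Measure E)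
    [μ.IsAddHaarMeasure] {n k : ℕ} (hnk : Module.finrank ℝ E + 1 + k < 2 * n) {D : ℝ}
    (hD : 0 ≤ D) :
    Integrable (fun p : E × ℝ => ‖p‖ ^ k * ((‖p.1‖ ^ 2 + (p.2 + D) ^ 2 + 1) ^ n)⁻¹)
      ((μ.prod volume).restrict {p | 0 < p.2}) := by
  have hdecay : Integrable (fun p : E × ℝ => (1 + ‖p‖) ^ (-((2 * n - k : ℕ) : ℝ)))
      (μ.prod volume) :=
    integrable_one_add_norm (by
      rw [Module.finrank_prod, Module.finrank_self]
      exact_mod_cast (by omega : Module.finrank ℝ E + 1 < 2 * n - k))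
  refine ((hdecay.const_mul (2 ^ n)).restrict).mono' (by fun_prop) ?_
  rw [ae_restrict_iff' (measurableSet_lt measurable_const measurable_snd)]
  refine Eventually.of_forall fun p (hp : 0 < p.2) => ?_
  rw [Real.rpow_neg (by positivity), Real.rpow_natCast, Real.norm_eq_abs,
    abs_of_nonneg (by positivity), ← div_eq_mul_inv, ← div_eq_mul_inv,
    div_le_div_iff₀ (by positivity) (by positivity)]
  calc ‖p‖ ^ k * (1 + ‖p‖) ^ (2 * n - k)
      ≤ (1 + ‖p‖) ^ k * (1 + ‖p‖) ^ (2 * n - k) := by gcongr; linarith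
    _ = ((1 + ‖p‖) ^ 2) ^ n := by rw [← pow_add, ← pow_mul]; congr 1; omega
    _ ≤ (2 * (‖p.1‖ ^ 2 + (p.2 + D) ^ 2 + 1)) ^ n := by
      gcongr; exact one_add_norm_sq_le_of_snd_nonneg hD hp.le
    _ = 2 ^ n * (‖p.1‖ ^ 2 + (p.2 + D) ^ 2 + 1) ^ n := mul_pow _ _ _

theorem stmt14_general {n : ℕ} (hn : 3 ≤ n) (D : ℝ) (hD : 0 ≤ D)
    (K : EuclideanSpace ℝ (Fin (n - 1)) × ℝ → ℝ)
    (hKsm : ContDiff ℝ 2 K)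
    (hK1 : ∃ C, ∀ p, ‖iteratedFDeriv ℝ 1 K p‖ ≤ C) :
    (fun lam : ℝ =>
        (∫ p in {p : EuclideanSpace ℝ (Fin (n - 1)) × ℝ | 0 < p.2},
            K (lam • p.1, lam * p.2) / (‖p.1‖ ^ 2 + (p.2 + D) ^ 2 + 1) ^ n) -
          K 0 * (∫ p in {p : EuclideanSpace ℝ (Fin (n - 1)) × ℝ | 0 < p.2},
            (1 : ℝ) / (‖p.1‖ ^ 2 + (p.2 + D) ^ 2 + 1) ^ n) -
          lam * fderiv ℝ K 0 ((0 : EuclideanSpace ℝ (Fin (n - 1))), (1 : ℝ)) *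
            ∫ p in {p : EuclideanSpace ℝ (Fin (n - 1)) × ℝ | 0 < p.2},
              p.2 / (‖p.1‖ ^ 2 + (p.2 + D) ^ 2 + 1) ^ n) =o[𝓝[>] (0 : ℝ)]
      fun lam => lam := by
  obtain ⟨C, hC⟩ := hK1
  have hmoment (k : ℕ) (hk : k ≤ 1) := integrable_norm_pow_mul_inv_weight
    (volume : Measure (EuclideanSpace ℝ (Fin (n - 1)))) (n := n) (k := k)
    (by rw [finrank_euclideanSpace_fin]; omega) hD
  have hw := by simpa only [pow_zero, one_mul] using hmoment 0 zero_le_one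
  have hw' := by simpa only [pow_one] using hmoment 1 le_rfl
  have hderiv := (hasDerivAt_integral_comp_smul_mul (hKsm.differentiable two_ne_zero)
    (fun p => (norm_iteratedFDeriv_one K).symm.le.trans (hC p)) hw hw').congr_deriv
    (setIntegral_clm_mul_eq_of_even_fst volume volume measurableSet_Ioi (fderiv ℝ K 0)
      (fun x y => by rw [norm_neg]) hw hw')
  refine ((hasDerivAt_iff_isLittleO.mp hderiv).mono nhdsWithin_le_nhds).congr' ?_ (by simp)
  filter_upwards with lam
  simp only [Prod.smul_def, smul_eq_mul, div_eq_mul_inv, one_mul, zero_smul, integral_const_mul,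
    Set.mem_Ioi, sub_zero, ← Measure.volume_eq_prod]
  ring

/-- For bounded `C²` `K` with bounded first and second derivatives, as `λ → 0⁺`,
`∫_{ℝⁿ₊} K(λȳ, λyₙ)/(|ȳ|²+(yₙ+𝔇)²+1)ⁿ = K(0)·A + λ·∂ₙK(0)·B + o(λ)`,
where `A`, `B` are the zeroth and first vertical moments of the model kernel. -/
theorem stmt14 {n : ℕ} (hn : 3 ≤ n) (D : ℝ) (hD : 0 ≤ D)
    (K : EuclideanSpace ℝ (Fin (n - 1)) × ℝ → ℝ)
    (hKsm : ContDiff ℝ 2 K)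
    (hKb : ∃ C, ∀ p, |K p| ≤ C)
    (hK1 : ∃ C, ∀ p, ‖iteratedFDeriv ℝ 1 K p‖ ≤ C)
    (hK2 : ∃ C, ∀ p, ‖iteratedFDeriv ℝ 2 K p‖ ≤ C) :
    (fun lam : ℝ =>
        (∫ p in {p : EuclideanSpace ℝ (Fin (n - 1)) × ℝ | 0 < p.2},
            K (lam • p.1, lam * p.2) / (‖p.1‖ ^ 2 + (p.2 + D) ^ 2 + 1) ^ n) -
          K 0 * (∫ p in {p : EuclideanSpace ℝ (Fin (n - 1)) × ℝ | 0 < p.2},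
            (1 : ℝ) / (‖p.1‖ ^ 2 + (p.2 + D) ^ 2 + 1) ^ n) -
          lam * fderiv ℝ K 0 ((0 : EuclideanSpace ℝ (Fin (n - 1))), (1 : ℝ)) *
            ∫ p in {p : EuclideanSpace ℝ (Fin (n - 1)) × ℝ | 0 < p.2},
              p.2 / (‖p.1‖ ^ 2 + (p.2 + D) ^ 2 + 1) ^ n) =o[𝓝[>] (0 : ℝ)]
      fun lam => lam :=
  stmt14_general hn D hD K hKsm hK1
end
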